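/- Let V, U be complex p×q matrices with ‖V‖ < 1 and ‖U‖ ≤ 1. Then the kernel of I_q − U*U and the kernel of I_q − 𝓕_V(U)*𝓕_V(U) have the same dimension. In particular, ‖U‖ = 1 if and only if ‖𝓕_V(U)‖ = 1 (the map 𝓕_V carries the boundary of the unit ball to the boundary), and for every k, U is isometric on a subspace of ℂ^q of dimension at least k if and only if 𝓕_V(U) is isometric on a subspace of dimension at least k. -/

import Mathlib

/-!
Write `A = (1 - V V*)^{1/2}`, `B = (1 - V* V)^{1/2}` and `W = (1 - V* U)⁻¹` (invertible since
`‖V* U‖ < 1`). Both square roots are the same polynomial in `1 - V V*` and `1 - V* V`, so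
`V (1 - V* V) = (1 - V V*) V` gives `V B = A V`, and a direct expansion then yields
`1 - 𝓕_V(U)* 𝓕_V(U) = (W B)* (1 - U* U) (W B)` with `W B` invertible. Hence the two kernels have
the same dimension. For a contraction `X`, the kernel of `1 - X* X` is exactly the set of vectors
on which `X` is isometric, and `‖X‖ = 1` iff this kernel is nonzero, because the operator norm is
attained on the compact unit sphere.
-/

open scoped Matrix.Norms.L2Operator ComplexOrder
open Matrix

/-- The positive semidefinite square root of a positive semidefinite matrix,
extended by `0` to all matrices. -/
noncomputable def matSqrt {n : Type*} [Fintype n] [DecidableEq n] (M : Matrix n n ℂ) :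
    Matrix n n ℂ :=
  letI := Classical.dec M.PosSemidef
  if h : M.PosSemidef then
    (h.1.eigenvectorUnitary : Matrix n n ℂ) * diagonal ((↑) ∘ (√·) ∘ h.1.eigenvalues) *
      (star (h.1.eigenvectorUnitary : Matrix n n ℂ))
  else 0

/-- The linear fractional transformation
`𝓕_V(U) = V − (I − V V*)^{1/2} U (I − V* U)⁻¹ (I − V* V)^{1/2}`. -/
noncomputable def lft {p q : ℕ} (V U : Matrix (Fin p) (Fin q) ℂ) : Matrix (Fin p) (Fin q) ℂ :=
  V - matSqrt (1 - V * Vᴴ) * U * (1 - Vᴴ * U)⁻¹ * matSqrt (1 - Vᴴ * V)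

def IsometricOnDimGE {p q : ℕ} (U : Matrix (Fin p) (Fin q) ℂ) (k : ℕ) : Prop :=
  ∃ S : Submodule ℂ (EuclideanSpace ℂ (Fin q)), k ≤ Module.finrank ℂ S ∧
    ∀ y ∈ S, ‖Matrix.toEuclideanLin U y‖ = ‖y‖

open scoped MatrixOrder
open Polynomial

lemma ContinuousLinearMap.exists_norm_eq_one_norm_apply_eq_opNorm {𝕜 E F : Type*} [RCLike 𝕜]
    [NormedAddCommGroup E] [NormedSpace 𝕜 E] [FiniteDimensional 𝕜 E] [Nontrivial E]
    [NormedAddCommGroup F] [NormedSpace 𝕜 F] (f : E →L[𝕜] F) :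
    ∃ x, ‖x‖ = 1 ∧ ‖f x‖ = ‖f‖ := by
  have := FiniteDimensional.proper_rclike 𝕜 E
  have hne : (Metric.sphere (0 : E) 1).Nonempty :=
    Set.nonempty_coe_sort.mp (NormedSpace.sphere_nonempty_rclike 𝕜 zero_le_one)
  obtain ⟨x, hx, hfx⟩ := ((isCompact_sphere (0 : E) 1).image f.continuous.norm).sSup_mem
    (hne.image fun x => ‖f x‖)
  exact ⟨x, by simpa using hx, hfx.trans f.sSup_sphere_eq_norm⟩

lemma EuclideanSpace.star_dotProduct_self {n : Type*} [Fintype n] (y : EuclideanSpace ℂ n) :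
    star y.ofLp ⬝ᵥ y.ofLp = ((‖y‖ ^ 2 : ℝ) : ℂ) := by
  rw [dotProduct_comm, ← EuclideanSpace.inner_eq_star_dotProduct, inner_self_eq_norm_sq_to_K]
  push_cast
  rfl

namespace Matrix

variable {m n : Type*} [Fintype m] [Fintype n] [DecidableEq n]

lemma finrank_ker_mulVecLin_mul_mul {K : Type*} [Field K] {D Z C : Matrix n n K}
    (hD : IsUnit D.det) (hC : IsUnit C.det) :
    Module.finrank K (LinearMap.ker (D * Z * C).mulVecLin) =
      Module.finrank K (LinearMap.ker Z.mulVecLin) := by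
  have hrank : (D * Z * C).rank = Z.rank := by
    rw [rank_mul_eq_left_of_isUnit_det _ _ hC, rank_mul_eq_right_of_isUnit_det _ _ hD]
  have h₁ := (D * Z * C).mulVecLin.finrank_range_add_finrank_ker
  have h₂ := Z.mulVecLin.finrank_range_add_finrank_ker
  unfold rank at hrank
  omega

lemma mul_aeval_eq_aeval_mul {R α : Type*} [CommSemiring R] [CommSemiring α] [Algebra R α]
    [DecidableEq m] {A : Matrix m n α} {M : Matrix n n α} {N : Matrix m m α}
    (h : A * M = N * A) (g : R[X]) : A * aeval M g = aeval N g * A := by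
  induction g using Polynomial.induction_on' with
  | add f g hf hg => rw [map_add, map_add, Matrix.mul_add, Matrix.add_mul, hf, hg]
  | monomial k a =>
    have hpow : A * M ^ k = N ^ k * A := by
      induction k with
      | zero => simp
      | succ k ih =>
        rw [pow_succ, pow_succ, ← Matrix.mul_assoc, ih, Matrix.mul_assoc, h, Matrix.mul_assoc]
    simp only [aeval_monomial, Algebra.algebraMap_eq_smul_one, smul_mul_assoc, one_mul,
      Matrix.mul_smul, Matrix.smul_mul, hpow]

lemma IsHermitian.cfc_eq_aeval {M : Matrix n n ℂ} (hM : M.IsHermitian) {f : ℝ → ℝ} {g : ℝ[X]}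
    {s : Finset ℝ} (hs : Set.range hM.eigenvalues ⊆ s) (hg : ∀ x ∈ s, g.eval x = f x) :
    cfc f M = aeval M g := by
  rw [← cfc_polynomial g M hM.isSelfAdjoint]
  refine cfc_congr fun x hx => (hg x (hs ?_)).symm
  rwa [← hM.spectrum_real_eq_range_eigenvalues]

lemma mul_cfc_eq_cfc_mul [DecidableEq m] {A : Matrix m n ℂ} {M : Matrix n n ℂ}
    {N : Matrix m m ℂ} (hM : M.IsHermitian) (hN : N.IsHermitian) (h : A * M = N * A)
    (f : ℝ → ℝ) : A * cfc f M = cfc f N * A := by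
  classical
  -- `f` agrees on both (finite) spectra with its Lagrange interpolation polynomial
  set s := Finset.univ.image hM.eigenvalues ∪ Finset.univ.image hN.eigenvalues
  have hg : ∀ x ∈ s, (Lagrange.interpolate s id f).eval x = f x := fun x hx =>
    Lagrange.eval_interpolate_at_node f (Set.injOn_id _) hx
  rw [hM.cfc_eq_aeval (fun x hx => ?_) hg, hN.cfc_eq_aeval (fun x hx => ?_) hg]
  · exact mul_aeval_eq_aeval_mul h _
  all_goals
    obtain ⟨i, rfl⟩ := hx
    simp [s]

lemma mul_sqrt_eq_sqrt_mul [DecidableEq m] {A : Matrix m n ℂ} {M : Matrix n n ℂ}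
    {N : Matrix m m ℂ} (hM : M.PosSemidef) (hN : N.PosSemidef) (h : A * M = N * A) :
    A * CFC.sqrt M = CFC.sqrt N * A := by
  rw [CFC.sqrt_eq_real_sqrt M hM.nonneg, CFC.sqrt_eq_real_sqrt N hN.nonneg, cfcₙ_eq_cfc,
    cfcₙ_eq_cfc]
  exact mul_cfc_eq_cfc_mul hM.1 hN.1 h _

lemma matSqrt_eq_sqrt {M : Matrix n n ℂ} (hM : M.PosSemidef) : matSqrt M = CFC.sqrt M := by
  rw [CFC.sqrt_eq_real_sqrt M hM.nonneg, cfcₙ_eq_cfc, hM.1.cfc_eq]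
  simp [matSqrt, hM, IsHermitian.cfc, Unitary.conjStarAlgAut_apply]

lemma star_dotProduct_one_sub_conjTranspose_mul_self_mulVec (X : Matrix m n ℂ)
    (y : EuclideanSpace ℂ n) :
    star y.ofLp ⬝ᵥ ((1 - Xᴴ * X) *ᵥ y.ofLp) =
      ((‖y‖ ^ 2 - ‖toEuclideanLin X y‖ ^ 2 : ℝ) : ℂ) := by
  rw [sub_mulVec, one_mulVec, ← mulVec_mulVec, dotProduct_sub, dotProduct_mulVec,
    vecMul_conjTranspose, star_star, Complex.ofReal_sub, EuclideanSpace.star_dotProduct_self,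
    ← EuclideanSpace.star_dotProduct_self (toEuclideanLin X y)]
  rfl

lemma l2_opNorm_le_one_iff (X : Matrix m n ℂ) :
    ‖X‖ ≤ 1 ↔ ∀ y, ‖toEuclideanLin X y‖ ≤ ‖y‖ := by
  rw [l2_opNorm_def, ContinuousLinearMap.opNorm_le_iff zero_le_one]
  simp

lemma posSemidef_one_sub_conjTranspose_mul_self_iff (X : Matrix m n ℂ) :
    (1 - Xᴴ * X).PosSemidef ↔ ‖X‖ ≤ 1 := by
  rw [l2_opNorm_le_one_iff]
  refine ⟨fun h y => ?_, fun h => ?_⟩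
  · have := h.dotProduct_mulVec_nonneg y.ofLp
    rw [star_dotProduct_one_sub_conjTranspose_mul_self_mulVec, Complex.zero_le_real,
      sub_nonneg] at this
    exact (sq_le_sq₀ (norm_nonneg _) (norm_nonneg _)).mp this
  · refine .of_dotProduct_mulVec_nonneg
      (isHermitian_one.sub (isHermitian_conjTranspose_mul_self X)) fun v => ?_
    rw [← WithLp.ofLp_toLp 2 v, star_dotProduct_one_sub_conjTranspose_mul_self_mulVec,
      Complex.zero_le_real, sub_nonneg]
    gcongr
    exact h _

lemma posDef_one_sub_conjTranspose_mul_self {X : Matrix m n ℂ} (hX : ‖X‖ < 1) :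
    (1 - Xᴴ * X).PosDef := by
  refine .of_dotProduct_mulVec_pos
    (isHermitian_one.sub (isHermitian_conjTranspose_mul_self X)) fun v hv => ?_
  rw [← WithLp.ofLp_toLp 2 v, star_dotProduct_one_sub_conjTranspose_mul_self_mulVec,
    Complex.zero_lt_real, sub_pos]
  have hy : 0 < ‖WithLp.toLp 2 v‖ := by simpa using hv
  gcongr
  calc _ ≤ ‖X‖ * ‖WithLp.toLp 2 v‖ := l2_opNorm_mulVec X _
    _ < _ := by nlinarith

lemma one_sub_conjTranspose_mul_self_mulVec_eq_zero_iff {X : Matrix m n ℂ} (hX : ‖X‖ ≤ 1)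
    (y : EuclideanSpace ℂ n) :
    (1 - Xᴴ * X) *ᵥ y.ofLp = 0 ↔ ‖toEuclideanLin X y‖ = ‖y‖ := by
  rw [← ((posSemidef_one_sub_conjTranspose_mul_self_iff X).mpr hX).dotProduct_mulVec_zero_iff,
    star_dotProduct_one_sub_conjTranspose_mul_self_mulVec, Complex.ofReal_eq_zero, sub_eq_zero,
    eq_comm]
  exact pow_left_inj₀ (norm_nonneg _) (norm_nonneg _) two_ne_zero

lemma l2_opNorm_eq_one_iff_finrank_ker_pos {X : Matrix m n ℂ} (hX : ‖X‖ ≤ 1) :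
    ‖X‖ = 1 ↔ 0 < Module.finrank ℂ (LinearMap.ker (1 - Xᴴ * X).mulVecLin) := by
  rw [Module.finrank_pos_iff_exists_ne_zero]
  constructor
  · intro h1
    cases isEmpty_or_nonempty n
    · simp [Subsingleton.elim X 0] at h1
    obtain ⟨y, hy, hXy⟩ : ∃ y : EuclideanSpace ℂ n, ‖y‖ = 1 ∧ ‖toEuclideanLin X y‖ = ‖X‖ :=
      ContinuousLinearMap.exists_norm_eq_one_norm_apply_eq_opNorm
        ((toEuclideanLin.trans LinearMap.toContinuousLinearMap) X)
    refine ⟨⟨y.ofLp, (one_sub_conjTranspose_mul_self_mulVec_eq_zero_iff hX y).mpr ?_⟩, fun h => ?_⟩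
    · rw [hy, hXy, h1]
    · have hy0 : y = 0 := by simpa using congrArg Subtype.val h
      simp [hy0] at hy
  · rintro ⟨⟨v, hv⟩, hv0⟩
    have hXv := (one_sub_conjTranspose_mul_self_mulVec_eq_zero_iff hX (WithLp.toLp 2 v)).mp hv
    have hpos : 0 < ‖WithLp.toLp 2 v‖ := by simpa using hv0
    refine le_antisymm hX (le_of_mul_le_mul_right ?_ hpos)
    calc 1 * ‖WithLp.toLp 2 v‖ = ‖toEuclideanLin X (WithLp.toLp 2 v)‖ := by rw [one_mul, hXv]
      _ ≤ ‖X‖ * ‖WithLp.toLp 2 v‖ := l2_opNorm_mulVec X _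

lemma one_sub_conjTranspose_mul_self_sub [DecidableEq m] {V U : Matrix m n ℂ}
    {A : Matrix m m ℂ} {B W : Matrix n n ℂ} (hA : Aᴴ = A) (hB : Bᴴ = B)
    (hA2 : A * A = 1 - V * Vᴴ) (hB2 : B * B = 1 - Vᴴ * V) (hVB : V * B = A * V)
    (hW : (1 - Vᴴ * U) * W = 1) :
    1 - (V - A * U * W * B)ᴴ * (V - A * U * W * B) = (W * B)ᴴ * (1 - Uᴴ * U) * (W * B) := by
  have hBV : B * Vᴴ = Vᴴ * A := by simpa [hA, hB] using congrArg conjTranspose hVB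
  have hVUW : Vᴴ * U * W = W - 1 := by
    rw [← hW, Matrix.sub_mul, Matrix.one_mul, sub_sub_cancel]
  have hWUV : Wᴴ * (Uᴴ * V) = Wᴴ - 1 := by
    have := congrArg conjTranspose hW
    simp only [conjTranspose_mul, conjTranspose_sub, conjTranspose_one,
      conjTranspose_conjTranspose] at this
    rw [← this, Matrix.mul_sub, Matrix.mul_one, sub_sub_cancel]
  calc 1 - (V - A * U * W * B)ᴴ * (V - A * U * W * B)
      = B * B + (Vᴴ * A) * U * W * B + B * Wᴴ * Uᴴ * (A * V)
          - B * Wᴴ * Uᴴ * (A * A) * U * W * B := by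
        simp only [conjTranspose_sub, conjTranspose_mul, hA, hB, hB2, Matrix.mul_sub,
          Matrix.sub_mul, Matrix.mul_assoc]
        abel
    _ = B * (1 + Vᴴ * U * W + Wᴴ * (Uᴴ * V)
          - Wᴴ * (Uᴴ * U - (Uᴴ * V) * (Vᴴ * U)) * W) * B := by
        rw [← hBV, ← hVB, hA2]
        simp only [Matrix.mul_sub, Matrix.sub_mul, Matrix.mul_add, Matrix.add_mul,
          Matrix.mul_one, Matrix.mul_assoc]
    _ = B * (Wᴴ * (1 - Uᴴ * U) * W) * B := by
        have : Wᴴ * (Uᴴ * U - (Uᴴ * V) * (Vᴴ * U)) * W =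
            Wᴴ * (Uᴴ * U) * W - (Wᴴ * (Uᴴ * V)) * (Vᴴ * U * W) := by noncomm_ring
        rw [this, hVUW, hWUV]
        noncomm_ring
    _ = (W * B)ᴴ * (1 - Uᴴ * U) * (W * B) := by
        simp only [conjTranspose_mul, hB, Matrix.mul_assoc]

end Matrix

lemma isometricOnDimGE_iff_le_finrank_ker {p q : ℕ} {X : Matrix (Fin p) (Fin q) ℂ}
    (hX : ‖X‖ ≤ 1) (k : ℕ) :
    IsometricOnDimGE X k ↔ k ≤ Module.finrank ℂ (LinearMap.ker (1 - Xᴴ * X).mulVecLin) := by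
  have hK : Module.finrank ℂ ((LinearMap.ker (1 - Xᴴ * X).mulVecLin).comap
      (WithLp.linearEquiv 2 ℂ (Fin q → ℂ)).toLinearMap) =
        Module.finrank ℂ (LinearMap.ker (1 - Xᴴ * X).mulVecLin) := by
    rw [Submodule.comap_equiv_eq_map_symm, LinearEquiv.finrank_map_eq]
  rw [← hK]
  refine ⟨fun ⟨S, hkS, hS⟩ => hkS.trans (Submodule.finrank_mono fun y hy =>
      (one_sub_conjTranspose_mul_self_mulVec_eq_zero_iff hX y).mpr (hS y hy)),
    fun hk => ⟨_, hk, fun y hy => (one_sub_conjTranspose_mul_self_mulVec_eq_zero_iff hX y).mp hy⟩⟩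

lemma exists_isUnit_det_one_sub_conjTranspose_mul_self_lft {p q : ℕ}
    {V U : Matrix (Fin p) (Fin q) ℂ} (hV : ‖V‖ < 1) (hU : ‖U‖ ≤ 1) :
    ∃ C : Matrix (Fin q) (Fin q) ℂ, IsUnit C.det ∧
      1 - (lft V U)ᴴ * lft V U = Cᴴ * (1 - Uᴴ * U) * C := by
  have hM := posDef_one_sub_conjTranspose_mul_self hV
  have hN : (1 - V * Vᴴ).PosDef := by
    simpa using posDef_one_sub_conjTranspose_mul_self (X := Vᴴ) (by rwa [l2_opNorm_conjTranspose])
  have hE : IsUnit (1 - Vᴴ * U).det := by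
    refine (isUnit_iff_isUnit_det _).mp (isUnit_one_sub_of_norm_lt_one ?_)
    calc ‖Vᴴ * U‖ ≤ ‖V‖ * ‖U‖ := l2_opNorm_conjTranspose V ▸ l2_opNorm_mul Vᴴ U
      _ < 1 := by nlinarith [norm_nonneg V, norm_nonneg U]
  have hB : IsUnit (CFC.sqrt (1 - Vᴴ * V)).det :=
    (isUnit_iff_isUnit_det _).mp ((CFC.isUnit_sqrt_iff _ hM.posSemidef.nonneg).mpr hM.isUnit)
  refine ⟨(1 - Vᴴ * U)⁻¹ * CFC.sqrt (1 - Vᴴ * V), ?_, ?_⟩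
  · rw [det_mul]
    exact (isUnit_nonsing_inv_det _ hE).mul hB
  · rw [lft, matSqrt_eq_sqrt hN.posSemidef, matSqrt_eq_sqrt hM.posSemidef]
    refine one_sub_conjTranspose_mul_self_sub (CFC.sqrt_nonneg _).isSelfAdjoint
      (CFC.sqrt_nonneg _).isSelfAdjoint (CFC.sqrt_mul_sqrt_self _ hN.posSemidef.nonneg)
      (CFC.sqrt_mul_sqrt_self _ hM.posSemidef.nonneg) ?_ (mul_nonsing_inv _ hE)
    refine mul_sqrt_eq_sqrt_mul hM.posSemidef hN.posSemidef ?_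
    simp only [Matrix.mul_sub, Matrix.sub_mul, Matrix.mul_one, Matrix.one_mul, Matrix.mul_assoc]

/-- `𝓕_V` preserves the dimension of the space on which a contraction is isometric:
`ker (I − U*U)` and `ker (I − 𝓕_V(U)*𝓕_V(U))` have the same dimension; in particular
boundary goes to boundary, and isometric subspaces of dimension `≥ k` correspond. -/
theorem lft_ker_dim_eq {p q : ℕ} (V U : Matrix (Fin p) (Fin q) ℂ)
    (hV : ‖V‖ < 1) (hU : ‖U‖ ≤ 1) :
    Module.finrank ℂ (LinearMap.ker (1 - Uᴴ * U).mulVecLin) =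
        Module.finrank ℂ (LinearMap.ker (1 - (lft V U)ᴴ * lft V U).mulVecLin) ∧
      (‖U‖ = 1 ↔ ‖lft V U‖ = 1) ∧
      ∀ k : ℕ, (IsometricOnDimGE U k ↔ IsometricOnDimGE (lft V U) k) := by
  obtain ⟨C, hC, hdefect⟩ := exists_isUnit_det_one_sub_conjTranspose_mul_self_lft hV hU
  have hker : Module.finrank ℂ (LinearMap.ker (1 - Uᴴ * U).mulVecLin) =
      Module.finrank ℂ (LinearMap.ker (1 - (lft V U)ᴴ * lft V U).mulVecLin) := by
    rw [hdefect, finrank_ker_mulVecLin_mul_mul (by simpa using hC.star) hC]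
  have hF : ‖lft V U‖ ≤ 1 := by
    rw [← posSemidef_one_sub_conjTranspose_mul_self_iff, hdefect]
    exact ((posSemidef_one_sub_conjTranspose_mul_self_iff U).mpr hU).conjTranspose_mul_mul_same C
  refine ⟨hker, ?_, fun k => ?_⟩
  · rw [l2_opNorm_eq_one_iff_finrank_ker_pos hU, l2_opNorm_eq_one_iff_finrank_ker_pos hF, hker]
  · rw [isometricOnDimGE_iff_le_finrank_ker hU, isometricOnDimGE_iff_le_finrank_ker hF, hker]
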